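/- Let v : ℝᵈ → ℝ be smooth with compact support, w(x) = exp(‖x‖²/(2c)) with c > 0, and suppose f(t) = g(t)²/(2c) (the borderline case of the condition f − g²/(2c) ≥ 0). Then ∫ v·(f(t)·∇·(xv) + (g(t)²/2)·Δv)·w dx = −(g(t)²/2)·∫ ‖∇(v·w)(x)‖²·w(x)⁻¹ dx ≤ 0, i.e., the drift-diffusion operator is negative semidefinite on L²(ℝᵈ; w dx) in the borderline case. -/

import Mathlib

open MeasureTheory RealInnerProductSpace

noncomputable def wgt (d : ℕ) (c : ℝ) (x : EuclideanSpace ℝ (Fin d)) : ℝ :=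
  Real.exp (‖x‖ ^ 2 / (2 * c))

noncomputable def lapE (d : ℕ) (f : EuclideanSpace ℝ (Fin d) → ℝ) (x : EuclideanSpace ℝ (Fin d)) : ℝ :=
  ∑ i, fderiv ℝ (fun y => fderiv ℝ f y (EuclideanSpace.single i 1)) x (EuclideanSpace.single i 1)

noncomputable def divE (d : ℕ) (F : EuclideanSpace ℝ (Fin d) → EuclideanSpace ℝ (Fin d)) (x : EuclideanSpace ℝ (Fin d)) : ℝ :=
  ∑ i, fderiv ℝ F x (EuclideanSpace.single i 1) i

/-! ### Auxiliary lemmas -/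

section Aux

variable {d : ℕ} {c : ℝ}

local notation "E" => EuclideanSpace ℝ (Fin d)

lemma wgt_smooth : ContDiff ℝ (⊤ : ℕ∞) (wgt d c) :=
  ((contDiff_norm_sq ℝ).div_const (2*c)).exp

lemma wgt_pos (x : E) : (0:ℝ) < wgt d c x := Real.exp_pos _

lemma wgt_hasFDerivAt (x : E) :
    HasFDerivAt (wgt d c) ((wgt d c x / c) • (innerSL ℝ x)) x := by
  have h1 : HasFDerivAt (fun y : E => Real.exp (‖y‖^2 / (2*c)))
      ((Real.exp (‖x‖^2 / (2*c)) / c) • (innerSL ℝ x)) x := by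
    have h0 := (((hasStrictFDerivAt_norm_sq x).hasFDerivAt.mul_const ((2*c)⁻¹)).exp)
    have he : (fun y : E => Real.exp (‖y‖^2 / (2*c)))
        = fun y => Real.exp (‖y‖^2 * (2*c)⁻¹) := by
      funext y; rw [div_eq_mul_inv]
    rw [he]
    convert h0 using 1
    ext y
    simp [ContinuousLinearMap.smul_apply, div_eq_mul_inv]
    rw [smul_smul, ← Nat.cast_smul_eq_nsmul ℝ, smul_smul]; congr 1; push_cast; ring
  exact h1

lemma proj_coe (i : Fin d) :
    (⇑(innerSL ℝ (EuclideanSpace.single i (1:ℝ)))) = fun y : E => y i := by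
  ext y; simp [EuclideanSpace.inner_single_left]

lemma proj_hasFDerivAt (i : Fin d) (x : E) :
    HasFDerivAt (fun y : E => y i) (innerSL ℝ (EuclideanSpace.single i (1:ℝ))) x := by
  rw [← proj_coe i]; exact (innerSL ℝ (EuclideanSpace.single i (1:ℝ))).hasFDerivAt

lemma proj_continuous (i : Fin d) : Continuous (fun y : E => y i) := by
  rw [← proj_coe i]; exact (innerSL ℝ (EuclideanSpace.single i (1:ℝ))).continuous

lemma dv_smooth (v : E → ℝ) (hv : ContDiff ℝ (⊤ : ℕ∞) v) (i : Fin d) :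
    ContDiff ℝ (⊤ : ℕ∞) (fun y => fderiv ℝ v y (EuclideanSpace.single i 1)) :=
  (hv.fderiv_right (by simp)).clm_apply contDiff_const

lemma fderiv_apply_integrable (φ : E → ℝ) (hφ : ContDiff ℝ (⊤ : ℕ∞) φ) (hs : HasCompactSupport φ)
    (u : E) : Integrable (fun x => fderiv ℝ φ x u) := by
  have hc1 : Continuous fun x => fderiv ℝ φ x u :=
    (hφ.continuous_fderiv (by simp)).clm_apply continuous_const
  have hs1 : HasCompactSupport fun x => fderiv ℝ φ x u :=
    (hs.fderiv ℝ).comp_left (g := fun L : E →L[ℝ] ℝ => L u) rfl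
  exact hc1.integrable_of_hasCompactSupport hs1

lemma key_ibp (φ : E → ℝ) (hφ : ContDiff ℝ (⊤ : ℕ∞) φ) (hs : HasCompactSupport φ) (u : E) :
    ∫ x, fderiv ℝ φ x u = 0 := by
  have h1 : Integrable (fun x => fderiv ℝ φ x u) := fderiv_apply_integrable φ hφ hs u
  have h2 : Integrable φ := hφ.continuous.integrable_of_hasCompactSupport hs
  have := integral_mul_fderiv_eq_neg_fderiv_mul_of_integrable
    (f := fun _ : E => (1:ℝ)) (g := φ) (v := u)
    (by simpa using (integrable_zero _ _ _)) (by simpa using h1) (by simpa using h2)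
    (fun x _ => differentiableAt_const _) (fun x _ => hφ.differentiable (by simp) x)
  simpa using this

lemma gradient_coord (f : E → ℝ) (x : E) (i : Fin d) :
    gradient f x i = fderiv ℝ f x (EuclideanSpace.single i 1) := by
  have h : ⟪gradient f x, EuclideanSpace.single i (1:ℝ)⟫ = fderiv ℝ f x (EuclideanSpace.single i 1) := by
    simp [gradient, InnerProductSpace.toDual_symm_apply]
  rw [EuclideanSpace.inner_single_right] at h; simpa using h

lemma inner_gradient_eq (f : E → ℝ) (x : E) :
    ⟪x, gradient f x⟫ = ∑ i, x i * fderiv ℝ f x (EuclideanSpace.single i 1) := by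
  rw [PiLp.inner_apply]
  refine Finset.sum_congr rfl fun i _ => ?_
  rw [gradient_coord]
  simp [mul_comm]

lemma norm_gradient_sq (f : E → ℝ) (x : E) :
    ‖gradient f x‖^2 = ∑ i, (fderiv ℝ f x (EuclideanSpace.single i 1))^2 := by
  rw [EuclideanSpace.norm_eq, Real.sq_sqrt (by positivity)]
  exact Finset.sum_congr rfl fun i _ => by rw [Real.norm_eq_abs, sq_abs, gradient_coord]

/-- the vector field whose divergence realizes the integrand. -/
noncomputable def Phi (d : ℕ) (c gt : ℝ) (v : EuclideanSpace ℝ (Fin d) → ℝ) (i : Fin d)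
    (x : EuclideanSpace ℝ (Fin d)) : ℝ :=
  gt^2/2 * (v x * fderiv ℝ v x (EuclideanSpace.single i 1) * wgt d c x)
  + gt^2/(2*c) * ((v x * v x) * x i * wgt d c x)

lemma Phi_fderiv (gt : ℝ) (v : E → ℝ) (hv : ContDiff ℝ (⊤ : ℕ∞) v) (x : E) (i : Fin d) :
    fderiv ℝ (Phi d c gt v i) x (EuclideanSpace.single i 1)
      = gt^2/2 * ((v x * fderiv ℝ v x (EuclideanSpace.single i 1)) * (wgt d c x / c * x i)
          + wgt d c x * (v x * fderiv ℝ (fun y => fderiv ℝ v y (EuclideanSpace.single i 1)) x (EuclideanSpace.single i 1)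
            + fderiv ℝ v x (EuclideanSpace.single i 1) * fderiv ℝ v x (EuclideanSpace.single i 1)))
      + gt^2/(2*c) * (((v x * v x) * x i) * (wgt d c x / c * x i)
          + wgt d c x * ((v x * v x) * 1 + x i * (2 * v x * fderiv ℝ v x (EuclideanSpace.single i 1)))) := by
  have Hv : HasFDerivAt v (fderiv ℝ v x) x := (hv.differentiable (by simp) x).hasFDerivAt
  have Hvi : HasFDerivAt (fun y => fderiv ℝ v y (EuclideanSpace.single i 1))
      (fderiv ℝ (fun y => fderiv ℝ v y (EuclideanSpace.single i 1)) x) x :=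
    ((dv_smooth v hv i).differentiable (by simp) x).hasFDerivAt
  have Hw := wgt_hasFDerivAt (c := c) x
  have Hproj := proj_hasFDerivAt i x
  have H := ((((Hv.mul Hvi).mul Hw).const_mul (gt^2/2)).add
    ((((Hv.mul Hv).mul Hproj).mul Hw).const_mul (gt^2/(2*c))))
  rw [show Phi d c gt v i = fun y =>
      gt^2/2 * (v y * fderiv ℝ v y (EuclideanSpace.single i 1) * wgt d c y)
      + gt^2/(2*c) * ((v y * v y) * y i * wgt d c y) from rfl]
  rw [HasFDerivAt.fderiv (f := fun y => gt^2/2 * (v y * fderiv ℝ v y (EuclideanSpace.single i 1) * wgt d c y)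
      + gt^2/(2*c) * ((v y * v y) * y i * wgt d c y)) H]
  simp [ContinuousLinearMap.smul_apply, EuclideanSpace.inner_single_right, real_inner_comm]
  ring

lemma fderiv_vw (v : E → ℝ) (hv : ContDiff ℝ (⊤ : ℕ∞) v) (x : E) (i : Fin d) :
    fderiv ℝ (fun z => v z * wgt d c z) x (EuclideanSpace.single i 1)
      = fderiv ℝ v x (EuclideanSpace.single i 1) * wgt d c x
        + v x * (wgt d c x / c * x i) := by
  have Hv : HasFDerivAt v (fderiv ℝ v x) x := (hv.differentiable (by simp) x).hasFDerivAt
  have Hw := wgt_hasFDerivAt (c := c) x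
  rw [HasFDerivAt.fderiv (f := fun z => v z * wgt d c z) (Hv.mul Hw)]
  simp [ContinuousLinearMap.smul_apply, EuclideanSpace.inner_single_right, real_inner_comm]
  ring

lemma point_id (hc : c ≠ 0) (gt : ℝ) (v : E → ℝ) (hv : ContDiff ℝ (⊤ : ℕ∞) v) (ft : ℝ)
    (hb : ft = gt ^ 2 / (2 * c)) (x : E) :
    v x * (ft * (d * v x + ∑ i, x i * fderiv ℝ v x (EuclideanSpace.single i 1))
        + gt ^ 2 / 2 * lapE d v x) * wgt d c x
      + gt ^ 2 / 2 * ((∑ i, (fderiv ℝ (fun z => v z * wgt d c z) x (EuclideanSpace.single i 1))^2)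
          * (wgt d c x)⁻¹)
      = ∑ i, fderiv ℝ (Phi d c gt v i) x (EuclideanSpace.single i 1) := by
  have hW : wgt d c x ≠ 0 := (wgt_pos x).ne'
  have hRHS : ∑ i, fderiv ℝ (Phi d c gt v i) x (EuclideanSpace.single i 1)
      = (gt^2/2 * wgt d c x) * (∑ i, fderiv ℝ v x (EuclideanSpace.single i 1) * fderiv ℝ v x (EuclideanSpace.single i 1))
        + (gt^2/2 * v x * wgt d c x / c + 2 * (gt^2/(2*c)) * wgt d c x * v x)
            * (∑ i, x i * fderiv ℝ v x (EuclideanSpace.single i 1))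
        + (gt^2/2 * wgt d c x * v x) * lapE d v x
        + (gt^2/(2*c) * (v x * v x) * wgt d c x / c) * (∑ i, x i * x i)
        + (d : ℝ) * (gt^2/(2*c) * wgt d c x * (v x * v x)) := by
    rw [lapE, Finset.mul_sum, Finset.mul_sum, Finset.mul_sum, Finset.mul_sum]
    rw [← Finset.sum_add_distrib, ← Finset.sum_add_distrib, ← Finset.sum_add_distrib]
    rw [show ((d : ℝ) * (gt^2/(2*c) * wgt d c x * (v x * v x)))
        = ∑ _i : Fin d, (gt^2/(2*c) * wgt d c x * (v x * v x)) by
      rw [Finset.sum_const, Finset.card_univ, Fintype.card_fin, nsmul_eq_mul]]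
    rw [← Finset.sum_add_distrib]
    refine Finset.sum_congr rfl fun i _ => ?_
    rw [Phi_fderiv gt v hv x i]
    ring
  have hLsq : (∑ i, (fderiv ℝ (fun z => v z * wgt d c z) x (EuclideanSpace.single i 1))^2)
      = (wgt d c x * wgt d c x) * (∑ i, fderiv ℝ v x (EuclideanSpace.single i 1) * fderiv ℝ v x (EuclideanSpace.single i 1))
        + (2 * v x * wgt d c x * wgt d c x / c) * (∑ i, x i * fderiv ℝ v x (EuclideanSpace.single i 1))
        + (v x * v x * wgt d c x * wgt d c x / (c*c)) * (∑ i, x i * x i) := by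
    rw [Finset.mul_sum, Finset.mul_sum, Finset.mul_sum]
    rw [← Finset.sum_add_distrib, ← Finset.sum_add_distrib]
    refine Finset.sum_congr rfl fun i _ => ?_
    rw [fderiv_vw v hv x i]
    ring
  rw [hRHS, hLsq, hb]
  field_simp
  ring

end Aux

theorem stmt_18 (d : ℕ) (hd : 1 ≤ d) (c : ℝ) (hc : 0 < c)
    (v : EuclideanSpace ℝ (Fin d) → ℝ) (hv : ContDiff ℝ (⊤ : ℕ∞) v) (hvs : HasCompactSupport v)
    (ft gt : ℝ) (hft : 0 < ft) (hgt : 0 < gt) (hb : ft = gt ^ 2 / (2 * c)) :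
    (∫ x, v x * (ft * (d * v x + ⟪x, gradient v x⟫) + gt ^ 2 / 2 * lapE d v x) * wgt d c x
        = -(gt ^ 2 / 2) * ∫ x, ‖gradient (fun z => v z * wgt d c z) x‖ ^ 2 * (wgt d c x)⁻¹)
    ∧ (∫ x, v x * (ft * (d * v x + ⟪x, gradient v x⟫) + gt ^ 2 / 2 * lapE d v x) * wgt d c x ≤ 0) := by
  have hw : ContDiff ℝ (⊤ : ℕ∞) (wgt d c) := wgt_smooth
  -- explicit integrands
  set L : EuclideanSpace ℝ (Fin d) → ℝ := fun x =>
    v x * (ft * (d * v x + ∑ i, x i * fderiv ℝ v x (EuclideanSpace.single i 1))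
      + gt ^ 2 / 2 * lapE d v x) * wgt d c x with hL
  set R : EuclideanSpace ℝ (Fin d) → ℝ := fun x =>
    (∑ i, (fderiv ℝ (fun z => v z * wgt d c z) x (EuclideanSpace.single i 1))^2)
      * (wgt d c x)⁻¹ with hR
  have hu : ContDiff ℝ (⊤ : ℕ∞) (fun z => v z * wgt d c z) := hv.mul hw
  have hus : HasCompactSupport (fun z => v z * wgt d c z) := hvs.mul_right
  -- integral rewrites
  have hLrw : (∫ x, v x * (ft * (d * v x + ⟪x, gradient v x⟫) + gt ^ 2 / 2 * lapE d v x) * wgt d c x)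
      = ∫ x, L x := by
    refine integral_congr_ae (Filter.Eventually.of_forall fun x => ?_)
    simp only [hL, inner_gradient_eq]
  have hRrw : (∫ x, ‖gradient (fun z => v z * wgt d c z) x‖ ^ 2 * (wgt d c x)⁻¹)
      = ∫ x, R x := by
    refine integral_congr_ae (Filter.Eventually.of_forall fun x => ?_)
    simp only [hR, norm_gradient_sq]
  -- integrability of L
  have hLc : Continuous L := by
    apply Continuous.mul
    apply Continuous.mul hv.continuous
    apply Continuous.add
    · exact continuous_const.mul (Continuous.add (continuous_const.mul hv.continuous)
        (continuous_finset_sum _ fun i _ => (proj_continuous i).mul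
          ((hv.continuous_fderiv (by simp)).clm_apply continuous_const)))
    · refine continuous_const.mul (continuous_finset_sum _ fun i _ => ?_)
      exact ((dv_smooth v hv i).continuous_fderiv (by simp)).clm_apply continuous_const
    · exact hw.continuous
  have hLs : HasCompactSupport L := hvs.mul_right.mul_right
  have hLint : Integrable L := hLc.integrable_of_hasCompactSupport hLs
  -- integrability and positivity of R
  have hRc : Continuous R := by
    refine Continuous.mul (continuous_finset_sum _ fun i _ => ?_) ?_
    · exact (((hu.continuous_fderiv (by simp)).clm_apply continuous_const).pow 2)
    · exact (hw.continuous.inv₀ fun x => (wgt_pos x).ne')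
  have hRs : HasCompactSupport R := by
    refine HasCompactSupport.mul_right ?_
    exact (hus.fderiv ℝ).comp_left
      (g := fun T : EuclideanSpace ℝ (Fin d) →L[ℝ] ℝ =>
        ∑ j : Fin d, (T (EuclideanSpace.single j 1))^2) (by simp)
  have hRint : Integrable R := hRc.integrable_of_hasCompactSupport hRs
  have hRnonneg : 0 ≤ ∫ x, R x := by
    refine integral_nonneg fun x => ?_
    have h1 : (0:ℝ) ≤ (wgt d c x)⁻¹ := le_of_lt (inv_pos.2 (wgt_pos x))
    exact mul_nonneg (Finset.sum_nonneg fun i _ => sq_nonneg _) h1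
  -- the divergence identity integrated
  have hzero : (∫ x, (L x + gt ^ 2 / 2 * R x)) = 0 := by
    have hpt : ∀ x, L x + gt ^ 2 / 2 * R x
        = ∑ i, fderiv ℝ (Phi d c gt v i) x (EuclideanSpace.single i 1) := fun x =>
      point_id hc.ne' gt v hv ft hb x
    rw [integral_congr_ae (Filter.Eventually.of_forall hpt)]
    have hΦsmooth : ∀ i : Fin d, ContDiff ℝ (⊤ : ℕ∞) (Phi d c gt v i) := by
      intro i
      refine ContDiff.add ?_ ?_
      · exact contDiff_const.mul ((hv.mul (dv_smooth v hv i)).mul hw)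
      · refine contDiff_const.mul (((hv.mul hv).mul ?_).mul hw)
        rw [← proj_coe i]
        exact (innerSL ℝ (EuclideanSpace.single i (1:ℝ))).contDiff
    have hΦsupp : ∀ i : Fin d, HasCompactSupport (Phi d c gt v i) := by
      intro i
      refine HasCompactSupport.add ?_ ?_
      · exact ((hvs.mul_right).mul_right).mul_left
      · exact (((hvs.mul_right).mul_right).mul_right).mul_left
    rw [integral_finset_sum _ (fun i _ =>
      fderiv_apply_integrable _ (hΦsmooth i) (hΦsupp i) _)]
    exact Finset.sum_eq_zero fun i _ => key_ibp _ (hΦsmooth i) (hΦsupp i) _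
  have hsplit : (∫ x, L x) + gt ^ 2 / 2 * (∫ x, R x) = 0 := by
    rw [← integral_const_mul, ← integral_add hLint (hRint.const_mul _)]
    exact hzero
  have hmain : (∫ x, L x) = -(gt ^ 2 / 2) * ∫ x, R x := by linarith
  constructor
  · rw [hLrw, hRrw, hmain]
  · rw [hLrw, hmain]
    have : 0 ≤ gt ^ 2 / 2 * ∫ x, R x := mul_nonneg (by positivity) hRnonneg
    linarith
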